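/- arXiv:1703.06426 — 2 statements merged into one kernel-verified Lean document; each statement's English description precedes it below -/
import Mathlib

section
/- In the continuous-time infection process over a finite directed graph with fixed nonnegative real-valued delays δ, if all finite shortest-path distances min_{s∈S} d_δ(s,v) are distinct across seeds for each infected node v (no ties), then the label assignment rule 'v inherits the label of its earliest infector' yields, for each infected node v, the label y_{α(v)} of the unique seed α(v) = argmin_{s∈S} d_δ(s,v). -/
open scoped ENNReal Classical

variable {V : Type*}

/-- Minimum total delay over directed walks with exactly `k` edges from `u` to `v`. -/
noncomputable def walkCost (δ : V → V → ℝ≥0∞) : ℕ → V → V → ℝ≥0∞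
  | 0, u, v => if u = v then 0 else ⊤
  | k + 1, u, v => ⨅ w, δ u w + walkCost δ k w v

/-- Shortest-path distance under delays `δ`. -/
noncomputable def distDelay (δ : V → V → ℝ≥0∞) (u v : V) : ℝ≥0∞ :=
  ⨅ k, walkCost δ k u v

/-! An infected node's earliest infector reaches it along a shortest path, so the seed closest to
the infector is also closest to the node. Since the infection time strictly decreases along
infectors and the graph is finite, well-founded induction on the infection time shows that the
inherited label is that of the (unique) closest seed. -/

lemma distDelay_self (δ : V → V → ℝ≥0∞) (v : V) : distDelay δ v v = 0 :=
  le_antisymm (iInf_le_of_le 0 (by simp [walkCost])) zero_le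

lemma walkCost_succ_le_add (δ : V → V → ℝ≥0∞) (k : ℕ) (u v w : V) :
    walkCost δ (k + 1) u w ≤ walkCost δ k u v + δ v w := by
  induction k generalizing u with
  | zero =>
    by_cases h : u = v
    · subst h
      simpa [walkCost] using iInf_le (fun x => δ u x + walkCost δ 0 x w) w
    · simp [walkCost, h]
  | succ k ih =>
    rw [walkCost, walkCost, ENNReal.iInf_add]
    exact iInf_mono fun x => by rw [add_assoc]; exact add_le_add_right (ih x) _

lemma distDelay_le_add (δ : V → V → ℝ≥0∞) (u v w : V) :
    distDelay δ u w ≤ distDelay δ u v + δ v w := by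
  rw [distDelay, distDelay, ENNReal.iInf_add]
  exact le_iInf fun k => iInf_le_of_le (k + 1) (walkCost_succ_le_add δ k u v w)

section ClosestSeed

variable {δ : V → V → ℝ≥0∞} {S : Set V} {τ : V → ℝ≥0∞}

lemma le_distDelay_of_mem (hτ : ∀ v, τ v = ⨅ s ∈ S, distDelay δ s v) {s : V} (hs : s ∈ S)
    (v : V) : τ v ≤ distDelay δ s v :=
  (hτ v).trans_le (iInf₂_le s hs)

lemma distDelay_self_eq_of_mem (hτ : ∀ v, τ v = ⨅ s ∈ S, distDelay δ s v) {v : V}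
    (hv : v ∈ S) : distDelay δ v v = τ v := by
  have hτv := le_distDelay_of_mem hτ hv v
  rw [distDelay_self] at hτv ⊢
  exact (nonpos_iff_eq_zero.mp hτv).symm

lemma distDelay_eq_of_add_eq (hτ : ∀ v, τ v = ⨅ s ∈ S, distDelay δ s v) {s u v : V}
    (hs : s ∈ S) (hsu : distDelay δ s u = τ u) (huv : τ u + δ u v = τ v) :
    distDelay δ s v = τ v :=
  le_antisymm (huv ▸ hsu ▸ distDelay_le_add δ s u v) (le_distDelay_of_mem hτ hs v)

end ClosestSeed

/-- If for every infected node the distances from the seeds are distinct (no ties),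
then the recursive label-inheritance rule "each node inherits the label of its earliest
infector" assigns to each infected node `v` the label `y_{α(v)}` of the unique closest
seed `α(v) = argmin_{s ∈ S} d_δ(s, v)`. -/
theorem earliest_infector_label_eq_closest_seed_label
    [Finite V] {Λ : Type*} (δ : V → V → ℝ≥0∞) (hδpos : ∀ u v, 0 < δ u v)
    (S : Set V) (y : V → Λ) (τ : V → ℝ≥0∞)
    (hτ : ∀ v, τ v = ⨅ s ∈ S, distDelay δ s v)
    (ρ : V → V)
    (hρ : ∀ v, v ∉ S → τ v < ⊤ → τ (ρ v) + δ (ρ v) v = τ v)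
    (lab : V → Λ)
    (hlabS : ∀ s ∈ S, lab s = y s)
    (hlab : ∀ v, v ∉ S → τ v < ⊤ → lab v = lab (ρ v))
    (hnoties : ∀ v, τ v < ⊤ → ∃! s, s ∈ S ∧ distDelay δ s v = τ v) :
    ∀ v, τ v < ⊤ → ∀ s ∈ S, distDelay δ s v = τ v → lab v = y s := by
  intro v
  induction v using (Finite.wellFounded_of_trans_of_irrefl (InvImage (· < ·) τ)).induction with
  | _ v ih =>
  intro hv s hs hsv
  by_cases hvS : v ∈ S
  · rw [hlabS v hvS, (hnoties v hv).unique ⟨hs, hsv⟩ ⟨hvS, distDelay_self_eq_of_mem hτ hvS⟩]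
  · have hρv := hρ v hvS hv
    have hρv_lt : τ (ρ v) < τ v :=
      hρv ▸ ENNReal.lt_add_right (ne_top_of_le_ne_top hv.ne (hρv ▸ le_self_add))
        (hδpos (ρ v) v).ne'
    obtain ⟨t, ht, htρ⟩ := (hnoties (ρ v) (hρv_lt.trans hv)).exists
    have htv : distDelay δ t v = τ v := distDelay_eq_of_add_eq hτ ht htρ hρv
    rw [hlab v hvS hv, ih (ρ v) hρv_lt (hρv_lt.trans hv) t ht htρ,
      (hnoties v hv).unique ⟨hs, hsv⟩ ⟨ht, htv⟩]
end

section
/- Define the influence σ(S) of a seed set S ⊆ V as E[|{v : v reachable from S in (V,Ã)}|], where Ã is a random edge subset including each edge e ∈ E independently with probability p_e. Then σ is monotone (S ⊆ T implies σ(S) ≤ σ(T)) and submodular (for S ⊆ T and v ∉ T, σ(S ∪ {v}) − σ(S) ≥ σ(T ∪ {v}) − σ(T)). -/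
open scoped Classical

variable {V : Type*}

/-- Probability of the live-edge configuration `g`. -/
noncomputable def configWeight [Fintype V] (E : V → V → Prop) (p : V → V → ℝ)
    (g : V → V → Bool) : ℝ :=
  ∏ u, ∏ v,
    if E u v then (if g u v then p u v else 1 - p u v)
    else (if g u v then 0 else 1)

/-- The influence of a seed set: the expected number of nodes reachable from `S` in the
random live-edge graph. -/
noncomputable def influence [Fintype V] (E : V → V → Prop) (p : V → V → ℝ)
    (S : Finset V) : ℝ :=
  ∑ g : V → V → Bool,
    configWeight E p g *
      ({v | ∃ s ∈ S, Relation.ReflTransGen (fun a b => E a b ∧ g a b = true) s v}.ncard : ℝ)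

/-- Influence is monotone and submodular in the seed set. -/
theorem influence_monotone_submodular
    [Fintype V] (E : V → V → Prop) (p : V → V → ℝ)
    (hp : ∀ u v, E u v → 0 ≤ p u v ∧ p u v ≤ 1) :
    (∀ S T : Finset V, S ⊆ T → influence E p S ≤ influence E p T) ∧
      (∀ S T : Finset V, ∀ v : V, S ⊆ T → v ∉ T →
        influence E p (insert v T) - influence E p T
          ≤ influence E p (insert v S) - influence E p S) := by
  have hw : ∀ g : V → V → Bool, 0 ≤ configWeight E p g := by
    intro g
    apply Finset.prod_nonneg; intro u _
    apply Finset.prod_nonneg; intro v _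
    by_cases h : E u v
    · simp only [h, if_true]
      rcases hp u v h with ⟨h0, h1⟩
      split <;> linarith
    · simp only [h, if_false]
      split <;> norm_num
  set R : (V → V → Bool) → Finset V → Set V :=
    fun g S => {v | ∃ s ∈ S, Relation.ReflTransGen (fun a b => E a b ∧ g a b = true) s v}
    with hR
  have hmono : ∀ g (S T : Finset V), S ⊆ T → R g S ⊆ R g T := by
    intro g S T hST x hx
    obtain ⟨s, hs, hr⟩ := hx
    exact ⟨s, hST hs, hr⟩
  have hins : ∀ g (S : Finset V) (v : V), R g (insert v S) = R g {v} ∪ R g S := by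
    intro g S v
    ext x
    simp only [hR, Set.mem_setOf_eq, Finset.mem_insert, Finset.mem_singleton,
      Set.mem_union]
    constructor
    · rintro ⟨s, (rfl | hs), hr⟩
      · exact Or.inl ⟨s, rfl, hr⟩
      · exact Or.inr ⟨s, hs, hr⟩
    · rintro (⟨s, rfl, hr⟩ | ⟨s, hs, hr⟩)
      · exact ⟨s, Or.inl rfl, hr⟩
      · exact ⟨s, Or.inr hs, hr⟩
  have hcard : ∀ g (S : Finset V) (v : V),
      ((R g (insert v S)).ncard : ℝ) = (R g S).ncard + ((R g {v}) \ (R g S)).ncard := by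
    intro g S v
    rw [hins, Set.union_comm, ← Set.union_diff_self,
      Set.ncard_union_eq Set.disjoint_sdiff_right (Set.toFinite _) (Set.toFinite _)]
    push_cast
    ring
  constructor
  · intro S T hST
    unfold influence
    apply Finset.sum_le_sum
    intro g _
    apply mul_le_mul_of_nonneg_left _ (hw g)
    exact_mod_cast Set.ncard_le_ncard (hmono g S T hST) (Set.toFinite _)
  · intro S T v hST hvT
    unfold influence
    rw [← Finset.sum_sub_distrib, ← Finset.sum_sub_distrib]
    apply Finset.sum_le_sum
    intro g _
    rw [← mul_sub, ← mul_sub]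
    apply mul_le_mul_of_nonneg_left _ (hw g)
    have h1 := hcard g T v
    have h2 := hcard g S v
    rw [h1, h2]
    have hsub : (R g {v}) \ (R g T) ⊆ (R g {v}) \ (R g S) :=
      Set.diff_subset_diff_right (hmono g S T hST)
    have := Set.ncard_le_ncard hsub (Set.toFinite _)
    linarith [(Nat.cast_le (α := ℝ)).mpr this]
end
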